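/- Fix a natural number n₀. Define, for integers g ≥ 0, m ≥ 2, h with h/3 > (n₀+1)/3, S(g,h,m) = ( ln((2g)!) + 4·ln((m−1)!) − (m−1)·ln((2⌊g/(m−1)⌋+2)!) + ln( ⌊h/3 − (n₀+1)/3⌋! ) ) / ( 2g·ln m + 4m·ln m + (h/3)·ln h ). Then S(g,h,m) → 1 as g, h, m all tend to infinity jointly; that is, for every ε > 0 there exists N such that |S(g,h,m) − 1| < ε whenever g, h, m ≥ N. -/
import Mathlib
open Real Filter Nat

lemma mul_log_sub_log_le {a b : ℝ} (ha : 0 < a) (hab : a ≤ b) :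
    a * (Real.log b - Real.log a) ≤ b - a := by
  have hb : 0 < b := lt_of_lt_of_le ha hab
  have h1 : Real.log (b / a) ≤ b / a - 1 := Real.log_le_sub_one_of_pos (by positivity)
  rw [Real.log_div (ne_of_gt hb) (ne_of_gt ha)] at h1
  have h2 : a * (Real.log b - Real.log a) ≤ a * (b / a - 1) :=
    mul_le_mul_of_nonneg_left h1 ha.le
  calc a * (Real.log b - Real.log a) ≤ a * (b / a - 1) := h2
    _ = b - a := by field_simp

lemma log_fact_le (n : ℕ) : Real.log (n ! : ℝ) ≤ n * Real.log n := by
  induction n with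
  | zero => simp
  | succ k ih =>
    have hfact : (0:ℝ) < (k ! : ℝ) := by exact_mod_cast k.factorial_pos
    have hlogle : Real.log k ≤ Real.log ((k:ℝ) + 1) := by
      rcases Nat.eq_zero_or_pos k with hk | hk
      · simp [hk]
      · exact Real.log_le_log (by exact_mod_cast hk) (by linarith)
    have hln : 0 ≤ Real.log ((k:ℝ)+1) := by
      rw [show ((k:ℝ)+1) = ((k+1:ℕ):ℝ) by push_cast; ring]
      exact Real.log_natCast_nonneg _
    rw [Nat.factorial_succ, Nat.cast_mul, Real.log_mul (by positivity) (ne_of_gt hfact)]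
    push_cast
    nlinarith [Nat.cast_nonneg (α := ℝ) k]

lemma le_log_fact (n : ℕ) : n * Real.log n - n ≤ Real.log (n ! : ℝ) := by
  induction n with
  | zero => simp
  | succ k ih =>
    have hfact : (0:ℝ) < (k ! : ℝ) := by exact_mod_cast k.factorial_pos
    have key : (k:ℝ) * (Real.log ((k:ℝ)+1) - Real.log k) ≤ 1 := by
      rcases Nat.eq_zero_or_pos k with hk | hk
      · simp [hk]
      · have hkpos : (0:ℝ) < (k:ℝ) := by exact_mod_cast hk
        have := mul_log_sub_log_le hkpos (by linarith : (k:ℝ) ≤ (k:ℝ)+1)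
        linarith
    rw [Nat.factorial_succ, Nat.cast_mul, Real.log_mul (by positivity) (ne_of_gt hfact)]
    push_cast
    nlinarith [Nat.cast_nonneg (α := ℝ) k]

lemma log_natCast_le_log {r : ℕ} {x : ℝ} (hx : 1 ≤ x) (hrx : (r:ℝ) ≤ x) :
    Real.log r ≤ Real.log x := by
  rcases Nat.eq_zero_or_pos r with hr | hr
  · simp only [hr, Nat.cast_zero, Real.log_zero]
    exact Real.log_nonneg hx
  · exact Real.log_le_log (by exact_mod_cast hr) hrx

set_option maxHeartbeats 1000000 in
/-- Lemma A.2: with `n₀` fixed,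
`S(g,h,m) = (ln((2g)!) + 4 ln((m−1)!) − (m−1) ln((2⌊g/(m−1)⌋+2)!)
  + ln(⌊h/3 − (n₀+1)/3⌋!)) / (2g ln m + 4m ln m + (h/3) ln h) → 1`
as `g, h, m` jointly tend to infinity. -/
theorem limit2 (n₀ : ℕ) :
    ∀ ε : ℝ, 0 < ε → ∃ N : ℕ, ∀ g h m : ℕ, N ≤ g → N ≤ h → N ≤ m →
      |(Real.log ((2 * g)! : ℝ) + 4 * Real.log (((m - 1)!) : ℝ) -
            ((m : ℝ) - 1) * Real.log (((2 * (g / (m - 1)) + 2)!) : ℝ) +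
            Real.log ((((h - (n₀ + 1)) / 3)!) : ℝ)) /
          (2 * (g : ℝ) * Real.log m + 4 * (m : ℝ) * Real.log m +
            ((h : ℝ) / 3) * Real.log h) - 1| < ε := by
  intro ε hε
  refine ⟨⌈Real.exp (56/ε)⌉₊ + ⌈4*((n₀:ℝ)+5)/ε⌉₊ + 3*n₀ + 30, ?_⟩
  intro g h m hg hh hm
  have keyexp : ∀ k : ℕ, ⌈Real.exp (56/ε)⌉₊ + ⌈4*((n₀:ℝ)+5)/ε⌉₊ + 3*n₀ + 30 ≤ k →
      Real.exp (56/ε) ≤ (k:ℝ) := by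
    intro k hk
    calc Real.exp (56/ε) ≤ (⌈Real.exp (56/ε)⌉₊ : ℝ) := Nat.le_ceil _
      _ ≤ (k:ℝ) := Nat.cast_le.mpr (le_trans (by omega) hk)
  have hN2 : 4*((n₀:ℝ)+5)/ε ≤ (h:ℝ) := by
    calc 4*((n₀:ℝ)+5)/ε ≤ (⌈4*((n₀:ℝ)+5)/ε⌉₊ : ℝ) := Nat.le_ceil _
      _ ≤ (h:ℝ) := Nat.cast_le.mpr (le_trans (by omega) hh)
  have hglarge : 3*n₀ + 30 ≤ g := le_trans (by omega) hg
  have hhlarge : 3*n₀ + 30 ≤ h := le_trans (by omega) hh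
  have hmlarge : 3*n₀ + 30 ≤ m := le_trans (by omega) hm
  have hexpH : Real.exp (56/ε) ≤ (h:ℝ) := keyexp h hh
  have hexpM : Real.exp (56/ε) ≤ (m:ℝ) := keyexp m hm
  set G := (g:ℝ) with hGdef
  set M := (m:ℝ) with hMdef
  set H := (h:ℝ) with hHdef
  have hG30 : 3*(n₀:ℝ) + 30 ≤ G := by
    have h' : ((3*n₀+30:ℕ):ℝ) ≤ (g:ℝ) := Nat.cast_le.mpr hglarge
    push_cast at h'; exact h'
  have hM30 : 3*(n₀:ℝ) + 30 ≤ M := by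
    have h' : ((3*n₀+30:ℕ):ℝ) ≤ (m:ℝ) := Nat.cast_le.mpr hmlarge
    push_cast at h'; exact h'
  have hH30 : 3*(n₀:ℝ) + 30 ≤ H := by
    have h' : ((3*n₀+30:ℕ):ℝ) ≤ (h:ℝ) := Nat.cast_le.mpr hhlarge
    push_cast at h'; exact h'
  have hn0 : (0:ℝ) ≤ (n₀:ℝ) := Nat.cast_nonneg _
  have hGpos : (0:ℝ) < G := by linarith
  have hMpos : (0:ℝ) < M := by linarith
  have hHpos : (0:ℝ) < H := by linarith
  have hm1pos : (0:ℝ) < M - 1 := by linarith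
  have hm12 : (2:ℝ) ≤ M - 1 := by linarith
  -- log bounds
  have hlogM : 56/ε ≤ Real.log M := by
    calc 56/ε = Real.log (Real.exp (56/ε)) := (Real.log_exp _).symm
      _ ≤ Real.log M := Real.log_le_log (Real.exp_pos _) hexpM
  have hlogH : 56/ε ≤ Real.log H := by
    calc 56/ε = Real.log (Real.exp (56/ε)) := (Real.log_exp _).symm
      _ ≤ Real.log H := Real.log_le_log (Real.exp_pos _) hexpH
  have hεdiv : (0:ℝ) < 56/ε := by positivity
  have hlogMpos : 0 < Real.log M := lt_of_lt_of_le hεdiv hlogM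
  have hlogHpos : 0 < Real.log H := lt_of_lt_of_le hεdiv hlogH
  set Y := 2 * G * Real.log M + 4 * M * Real.log M + H / 3 * Real.log H with hYdef
  have hY : 0 < Y := by
    have a1 : 0 ≤ 2*G*Real.log M := mul_nonneg (by linarith) hlogMpos.le
    have a2 : 0 < 4*M*Real.log M := mul_pos (by linarith) hlogMpos
    have a3 : 0 ≤ H/3*Real.log H := mul_nonneg (by linarith) hlogHpos.le
    rw [hYdef]; linarith
  -- nat arithmetic for q
  have hm1nat : 1 ≤ m := by omega
  have hcastm1 : ((m - 1 : ℕ) : ℝ) = M - 1 := by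
    rw [Nat.cast_sub hm1nat, Nat.cast_one]
  set q : ℕ := g / (m - 1) with hqdef
  have hdm : (m-1) * q + g % (m-1) = g := Nat.div_add_mod g (m-1)
  have hmod : g % (m-1) < m - 1 := Nat.mod_lt _ (by omega)
  have hdmR' : ((m-1:ℕ):ℝ) * (q:ℝ) + ((g % (m-1) : ℕ):ℝ) = (g:ℝ) := by
    exact_mod_cast congrArg (Nat.cast : ℕ → ℝ) hdm
  rw [hcastm1] at hdmR'
  have hdmR : (M-1) * (q:ℝ) + ((g % (m-1) : ℕ):ℝ) = G := hdmR'
  have hmodR0 : (0:ℝ) ≤ ((g % (m-1) : ℕ):ℝ) := Nat.cast_nonneg _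
  have hmodR : ((g % (m-1) : ℕ):ℝ) < M - 1 := by
    rw [← hcastm1]; exact_mod_cast hmod
  have hq0 : (0:ℝ) ≤ (q:ℝ) := Nat.cast_nonneg _
  have hq1 : (M-1) * (q:ℝ) ≤ G := by linarith
  have hq2 : G < (M-1) * ((q:ℝ)+1) := by
    have e : (M-1) * ((q:ℝ)+1) = (M-1) * (q:ℝ) + (M-1) := by ring
    linarith
  -- nat arithmetic for r
  have hhn : n₀ + 1 ≤ h := by omega
  set r : ℕ := (h - (n₀+1)) / 3 with hrdef
  have hdu : 3 * r + (h - (n₀+1)) % 3 = h - (n₀+1) := Nat.div_add_mod _ 3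
  have hcastu : ((h - (n₀+1) : ℕ):ℝ) = H - ((n₀:ℝ)+1) := by
    rw [Nat.cast_sub hhn]; push_cast; ring
  have hduR' : 3*(r:ℝ) + (((h - (n₀+1)) % 3 : ℕ):ℝ) = ((h - (n₀+1) : ℕ):ℝ) := by
    exact_mod_cast congrArg (Nat.cast : ℕ → ℝ) hdu
  rw [hcastu] at hduR'
  have hduR : 3*(r:ℝ) + (((h - (n₀+1)) % 3 : ℕ):ℝ) = H - ((n₀:ℝ)+1) := hduR'
  have hmod3R : (((h - (n₀+1)) % 3 : ℕ):ℝ) ≤ 2 := by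
    have : (h - (n₀+1)) % 3 ≤ 2 := by omega
    exact_mod_cast this
  have hmod3R0 : (0:ℝ) ≤ (((h - (n₀+1)) % 3 : ℕ):ℝ) := Nat.cast_nonneg _
  have hr0 : (0:ℝ) ≤ (r:ℝ) := Nat.cast_nonneg _
  have hr1 : 3*(r:ℝ) ≤ H - ((n₀:ℝ)+1) := by linarith
  have hr2 : H - ((n₀:ℝ)+3) ≤ 3*(r:ℝ) := by linarith
  -- Stirling instantiations
  have sA1 : Real.log ((2*g)! : ℝ) ≤ 2*G * Real.log (2*G) := by
    have := log_fact_le (2*g); push_cast at this; exact this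
  have sA2 : 2*G * Real.log (2*G) - 2*G ≤ Real.log ((2*g)! : ℝ) := by
    have := le_log_fact (2*g); push_cast at this; exact this
  have sB1 : Real.log (((m-1)!) : ℝ) ≤ (M-1) * Real.log (M-1) := by
    have := log_fact_le (m-1); rw [hcastm1] at this; exact this
  have sB2 : (M-1) * Real.log (M-1) - (M-1) ≤ Real.log (((m-1)!) : ℝ) := by
    have := le_log_fact (m-1); rw [hcastm1] at this; exact this
  have sC1 : Real.log (((2*q+2)!) : ℝ) ≤ (2*(q:ℝ)+2) * Real.log (2*(q:ℝ)+2) := by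
    have := log_fact_le (2*q+2); push_cast at this; exact this
  have sC2 : (2*(q:ℝ)+2) * Real.log (2*(q:ℝ)+2) - (2*(q:ℝ)+2) ≤ Real.log (((2*q+2)!) : ℝ) := by
    have := le_log_fact (2*q+2); push_cast at this; exact this
  have sE1 : Real.log ((r !) : ℝ) ≤ (r:ℝ) * Real.log (r:ℝ) := log_fact_le r
  have sE2 : (r:ℝ) * Real.log (r:ℝ) - (r:ℝ) ≤ Real.log ((r !) : ℝ) := le_log_fact r
  -- abbreviations
  set LA := Real.log ((2*g)! : ℝ) with hLA
  set LB := Real.log (((m-1)!) : ℝ) with hLB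
  set LC := Real.log (((2*q+2)!) : ℝ) with hLC
  set LE := Real.log ((r !) : ℝ) with hLE
  set LQ := Real.log (2*(q:ℝ)+2) with hLQ
  set Lm1 := Real.log (M-1) with hLm1
  set L2G := Real.log (2*G) with hL2G
  clear_value G M H Y q r LA LB LC LE LQ Lm1 L2G
  -- facts about Q = 2q+2
  have hLQ0 : 0 ≤ LQ := by rw [hLQ]; exact Real.log_nonneg (by linarith)
  have hQle : 2*(q:ℝ)+2 ≤ 2*G/(M-1) + 2 := by
    have hqle : (q:ℝ) ≤ G/(M-1) := (le_div_iff₀ hm1pos).mpr (by linarith)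
    have e : 2*(G/(M-1)) = 2*G/(M-1) := by ring
    linarith
  have hQgt : 2*G/(M-1) < 2*(q:ℝ)+2 := by
    have hqgt : G/(M-1) < (q:ℝ)+1 := (div_lt_iff₀ hm1pos).mpr (by linarith)
    have e : 2*(G/(M-1)) = 2*G/(M-1) := by ring
    linarith
  have hfrac : 2*G/(M-1) + 2 = (2*G + 2*(M-1))/(M-1) := by
    field_simp
  have hLQle : LQ ≤ Real.log (2*G+2*(M-1)) - Lm1 := by
    have h1 : LQ ≤ Real.log (2*G/(M-1)+2) := by
      rw [hLQ]; exact Real.log_le_log (by linarith) hQle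
    rw [hfrac, Real.log_div (by linarith : (0:ℝ) < 2*G+2*(M-1)).ne' (ne_of_gt hm1pos)] at h1
    rw [hLm1]
    exact h1
  have hLQge : L2G - Lm1 ≤ LQ := by
    have h1 : Real.log (2*G/(M-1)) ≤ LQ := by
      rw [hLQ]; exact Real.log_le_log (by positivity) hQgt.le
    rw [Real.log_div (by linarith : (0:ℝ) < 2*G).ne' (ne_of_gt hm1pos)] at h1
    rw [hL2G, hLm1]
    exact h1
  have hLQlin : LQ ≤ 2*G/(M-1) + 1 := by
    have h1 := Real.log_le_sub_one_of_pos (show (0:ℝ) < 2*(q:ℝ)+2 by linarith)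
    rw [← hLQ] at h1; linarith
  have hLm10 : 0 ≤ Lm1 := by rw [hLm1]; exact Real.log_nonneg (by linarith)
  have hLm1le : Lm1 ≤ Real.log M := by
    rw [hLm1]; exact Real.log_le_log hm1pos (by linarith)
  -- P bounds
  have eP : (M-1)*(2*(q:ℝ)+2) = 2*((M-1)*(q:ℝ)) + 2*(M-1) := by ring
  have hP1 : 2*G < (M-1)*(2*(q:ℝ)+2) := by linarith
  have hP2 : (M-1)*(2*(q:ℝ)+2) ≤ 2*G + 2*(M-1) := by linarith
  -- the log-M minus log-(M-1) gap
  have t9 : (M-1)*(Real.log M - Lm1) ≤ 1 := by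
    have h1 := mul_log_sub_log_le hm1pos (show M-1 ≤ M by linarith)
    rw [← hLm1] at h1; linarith
  have hgap : Real.log M - Lm1 ≤ 1/2 := by
    have hΔ0 : 0 ≤ Real.log M - Lm1 := by linarith
    have h1 : 0 ≤ (M-1-2)*(Real.log M - Lm1) := mul_nonneg (by linarith) hΔ0
    linarith only [t9, h1]
  have t10 : 2*G*(Real.log M - Lm1) ≤ G := by
    have h1 : 2*G*(Real.log M - Lm1) ≤ 2*G*(1/2) :=
      mul_le_mul_of_nonneg_left hgap (by linarith)
    linarith
  -- lower bound on (M-1)*LC  (used for upper bound of Num)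
  have uC : 2*G*L2G - 2*G*Real.log M - 2*G - 2*M ≤ (M-1) * LC := by
    have s2 : (M-1)*((2*(q:ℝ)+2)*LQ - (2*(q:ℝ)+2)) ≤ (M-1)*LC :=
      mul_le_mul_of_nonneg_left sC2 hm1pos.le
    have e : (M-1)*((2*(q:ℝ)+2)*LQ - (2*(q:ℝ)+2))
        = (M-1)*(2*(q:ℝ)+2)*LQ - (M-1)*(2*(q:ℝ)+2) := by ring
    have s3 : 2*G*LQ ≤ (M-1)*(2*(q:ℝ)+2)*LQ := mul_le_mul_of_nonneg_right hP1.le hLQ0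
    have s4 : 2*G*(L2G - Lm1) ≤ 2*G*LQ := mul_le_mul_of_nonneg_left hLQge (by linarith)
    have s5 : 2*G*Lm1 ≤ 2*G*Real.log M := mul_le_mul_of_nonneg_left hLm1le (by linarith)
    linarith only [s2, e, s3, s4, s5, hP2, hMpos]
  -- upper bound on (M-1)*LC (used for lower bound of Num)
  have lC : (M-1) * LC ≤ 2*G*L2G - 2*G*Real.log M + 5*G + 4*M := by
    have t2 : (M-1)*LC ≤ (M-1)*((2*(q:ℝ)+2)*LQ) := mul_le_mul_of_nonneg_left sC1 hm1pos.le
    have e : (M-1)*((2*(q:ℝ)+2)*LQ) = 2*G*LQ + ((M-1)*(2*(q:ℝ)+2) - 2*G)*LQ := by ring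
    have t4 : ((M-1)*(2*(q:ℝ)+2) - 2*G)*LQ ≤ (2*(M-1))*LQ :=
      mul_le_mul_of_nonneg_right (by linarith) hLQ0
    have t5 : (2*(M-1))*LQ ≤ (2*(M-1))*(2*G/(M-1)+1) :=
      mul_le_mul_of_nonneg_left hLQlin (by linarith)
    have t6 : (2*(M-1))*(2*G/(M-1)+1) = 4*G + 2*(M-1) := by
      field_simp; ring
    have t7 : 2*G*LQ ≤ 2*G*(Real.log (2*G+2*(M-1)) - Lm1) :=
      mul_le_mul_of_nonneg_left hLQle (by linarith)
    have t8 : 2*G*(Real.log (2*G+2*(M-1)) - L2G) ≤ 2*(M-1) := by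
      have h1 := mul_log_sub_log_le (show (0:ℝ) < 2*G by linarith)
        (show 2*G ≤ 2*G+2*(M-1) by linarith)
      rw [← hL2G] at h1; linarith
    linarith only [t2, e, t4, t5, t6, t7, t8, t10, hMpos]
  -- B bounds
  have uB : 4*LB ≤ 4*M*Real.log M := by
    have h1 : LB ≤ (M-1)*Lm1 := sB1
    have h2 : (M-1)*Lm1 ≤ M*Real.log M :=
      mul_le_mul (by linarith) hLm1le hLm10 (by linarith)
    linarith
  have lB : 4*M*Real.log M - 4*Real.log M - 4 - 4*M ≤ 4*LB := by
    linarith only [sB2, t9]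
  -- E bounds
  have hrH : (r:ℝ) ≤ H/3 := by linarith
  have uE : LE ≤ H/3*Real.log H := by
    have p1 : Real.log (r:ℝ) ≤ Real.log H := log_natCast_le_log (by linarith) (by linarith)
    have p2 : (r:ℝ)*Real.log (r:ℝ) ≤ H/3*Real.log H :=
      mul_le_mul hrH p1 (Real.log_natCast_nonneg r) (by linarith)
    linarith only [sE1, p2]
  have lE : H/3*Real.log H - (((n₀:ℝ)+3)/3)*Real.log H - H/3*Real.log 6 - H/3 ≤ LE := by
    have hW1 : 1 ≤ (H - ((n₀:ℝ)+3))/3 := by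
      rw [le_div_iff₀ (by norm_num : (0:ℝ) < 3)]; linarith
    have hWpos : 0 < (H - ((n₀:ℝ)+3))/3 := by linarith
    have hWr : (H - ((n₀:ℝ)+3))/3 ≤ (r:ℝ) := by
      rw [div_le_iff₀ (by norm_num : (0:ℝ) < 3)]; linarith
    have p1 : (H - ((n₀:ℝ)+3))/3 * Real.log ((H - ((n₀:ℝ)+3))/3) ≤ (r:ℝ) * Real.log (r:ℝ) := by
      have l1 : Real.log ((H - ((n₀:ℝ)+3))/3) ≤ Real.log (r:ℝ) :=
        Real.log_le_log hWpos hWr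
      exact mul_le_mul hWr l1 (Real.log_nonneg hW1) hr0
    have p2 : Real.log H ≤ Real.log 6 + Real.log ((H - ((n₀:ℝ)+3))/3) := by
      have hle : H ≤ 6*((H - ((n₀:ℝ)+3))/3) := by
        rw [mul_div_assoc']
        rw [le_div_iff₀ (by norm_num : (0:ℝ) < 3)]
        linarith
      have q1 : Real.log H ≤ Real.log (6*((H - ((n₀:ℝ)+3))/3)) := Real.log_le_log hHpos hle
      rw [Real.log_mul (by norm_num) (ne_of_gt hWpos)] at q1
      exact q1
    have p3 : (H - ((n₀:ℝ)+3))/3*(Real.log H - Real.log 6)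
        ≤ (H - ((n₀:ℝ)+3))/3*Real.log ((H - ((n₀:ℝ)+3))/3) :=
      mul_le_mul_of_nonneg_left (by linarith) (by linarith)
    have p4 : (H - ((n₀:ℝ)+3))/3*(Real.log H - Real.log 6) = H/3*Real.log H
        - (((n₀:ℝ)+3)/3)*Real.log H - H/3*Real.log 6 + (((n₀:ℝ)+3)/3)*Real.log 6 := by
      ring
    have hlog60 : (0:ℝ) ≤ Real.log 6 := Real.log_nonneg (by norm_num)
    have p5 : 0 ≤ (((n₀:ℝ)+3)/3)*Real.log 6 := mul_nonneg (by linarith) hlog60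
    linarith only [sE2, p1, p3, p4, p5, hrH, hlogHpos]
  -- numerator bounds
  have hup : LA + 4*LB - (M-1)*LC + LE - Y ≤ 2*G + 2*M := by
    rw [hYdef]; linarith only [sA1, uB, uC, uE]
  have hlow : Y - (LA + 4*LB - (M-1)*LC + LE) ≤
      7*G + 8*M + 4*Real.log M + 4 + H/3 + (((n₀:ℝ)+3)/3)*Real.log H + H/3*Real.log 6 := by
    rw [hYdef]; linarith only [sA2, lB, lC, lE]
  -- epsilon bounds
  have e1 : 112*G ≤ ε*Y := by
    have k1 : 2*G*(56/ε) ≤ 2*G*Real.log M := mul_le_mul_of_nonneg_left hlogM (by linarith)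
    have k2 : 2*G*(56/ε) = 112*G/ε := by ring
    have a2 : 0 ≤ 4*M*Real.log M := mul_nonneg (by linarith) hlogMpos.le
    have a3 : 0 ≤ H/3*Real.log H := mul_nonneg (by linarith) hlogHpos.le
    have k3 : 112*G/ε ≤ Y := by rw [hYdef]; linarith only [k2 ▸ k1, a2, a3]
    calc 112*G = (112*G/ε)*ε := (div_mul_cancel₀ _ (ne_of_gt hε)).symm
      _ ≤ Y*ε := mul_le_mul_of_nonneg_right k3 hε.le
      _ = ε*Y := by ring
  have e2 : 224*M ≤ ε*Y := by
    have k1 : 4*M*(56/ε) ≤ 4*M*Real.log M := mul_le_mul_of_nonneg_left hlogM (by linarith)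
    have k2 : 4*M*(56/ε) = 224*M/ε := by ring
    have a2 : 0 ≤ 2*G*Real.log M := mul_nonneg (by linarith) hlogMpos.le
    have a3 : 0 ≤ H/3*Real.log H := mul_nonneg (by linarith) hlogHpos.le
    have k3 : 224*M/ε ≤ Y := by rw [hYdef]; linarith only [k2 ▸ k1, a2, a3]
    calc 224*M = (224*M/ε)*ε := (div_mul_cancel₀ _ (ne_of_gt hε)).symm
      _ ≤ Y*ε := mul_le_mul_of_nonneg_right k3 hε.le
      _ = ε*Y := by ring
  have e3 : 56*(H/3) ≤ ε*Y := by
    have k1 : H/3*(56/ε) ≤ H/3*Real.log H := mul_le_mul_of_nonneg_left hlogH (by linarith)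
    have k2 : H/3*(56/ε) = 56*(H/3)/ε := by ring
    have a2 : 0 ≤ 2*G*Real.log M := mul_nonneg (by linarith) hlogMpos.le
    have a3 : 0 ≤ 4*M*Real.log M := mul_nonneg (by linarith) hlogMpos.le
    have k3 : 56*(H/3)/ε ≤ Y := by rw [hYdef]; linarith only [k2 ▸ k1, a2, a3]
    calc 56*(H/3) = (56*(H/3)/ε)*ε := (div_mul_cancel₀ _ (ne_of_gt hε)).symm
      _ ≤ Y*ε := mul_le_mul_of_nonneg_right k3 hε.le
      _ = ε*Y := by ring
  have e4 : (((n₀:ℝ)+3)/3)*Real.log H ≤ (ε/4)*Y := by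
    have hcH : 4*((n₀:ℝ)+5) ≤ ε*H := by
      have h1 := (div_le_iff₀ hε).mp hN2
      linarith
    have k1 : (((n₀:ℝ)+3)/3)*Real.log H ≤ (ε*H/12)*Real.log H :=
      mul_le_mul_of_nonneg_right (by linarith) hlogHpos.le
    have k2 : (ε*H/12)*Real.log H = (ε/4)*(H/3*Real.log H) := by ring
    have a2 : 0 ≤ 2*G*Real.log M := mul_nonneg (by linarith) hlogMpos.le
    have a3 : 0 ≤ 4*M*Real.log M := mul_nonneg (by linarith) hlogMpos.le
    have k3 : (ε/4)*(H/3*Real.log H) ≤ (ε/4)*Y := by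
      apply mul_le_mul_of_nonneg_left _ (by positivity)
      rw [hYdef]; linarith
    linarith [k2 ▸ k1]
  have e5 : Real.log 6 ≤ 5 := by
    have h1 := Real.log_le_sub_one_of_pos (show (0:ℝ) < 6 by norm_num)
    linarith
  have e6 : Real.log M ≤ M := by
    have h1 := Real.log_le_sub_one_of_pos hMpos; linarith
  have e7 : H/3*Real.log 6 ≤ 5*(H/3) := by
    have h1 : H/3*Real.log 6 ≤ H/3*5 := mul_le_mul_of_nonneg_left e5 (by linarith)
    linarith
  have hεY : 0 < ε*Y := mul_pos hε hY
  -- final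
  have habs : |LA + 4*LB - (M-1)*LC + LE - Y| < ε*Y := by
    rw [abs_sub_lt_iff]
    constructor
    · linarith only [hup, e1, e2, hεY]
    · have hM4 : (4:ℝ) ≤ M := by linarith
      linarith only [hlow, e1, e2, e3, e4, e6, e7, hεY, hM4]
  have hrw : (LA + 4*LB - (M-1)*LC + LE)/Y - 1 = (LA + 4*LB - (M-1)*LC + LE - Y)/Y := by
    rw [sub_div, div_self (ne_of_gt hY)]
  rw [hrw, abs_div, abs_of_pos hY, div_lt_iff₀ hY]
  exact habs
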